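/- Let A be an n×n symmetric positive definite matrix with condition number κ_A, and let η ≥ 4n κ_A². Then the function g(x) = (η/2)‖x‖₂² − ln(xᵀAx) is convex on the unit simplex Ω; i.e., its Hessian ηI − ∇²φ_A(x) is positive definite for all x ∈ Ω. -/

import Mathlib

/-!
By Cauchy–Schwarz for the inner product `⟨u, v⟩ = uᵀAv`, `(yᵀAx)² ≤ (xᵀAx)(yᵀAy)`, so the
quadratic form of `∇²φ_A(x)` is at most `2 yᵀAy / xᵀAx ≤ 2 λ_max ‖y‖² / xᵀAx`. On the simplex
`1 = (∑ xᵢ)² ≤ n ‖x‖²`, so `xᵀAx ≥ λ_min / n` and `∇²φ_A(x) ≤ 2nκ_A I`, which lies strictly below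
`η I` because `η ≥ 4nκ_A² > 2nκ_A`.
-/

open Matrix

/-- The Hessian of `φ_A(x) = -ln(xᵀAx)`. -/
noncomputable def hessPhi {n : ℕ} (A : Matrix (Fin n) (Fin n) ℝ) (x : Fin n → ℝ) :
    Matrix (Fin n) (Fin n) ℝ :=
  (4 / (x ⬝ᵥ A.mulVec x) ^ 2) • Matrix.vecMulVec (A.mulVec x) (A.mulVec x)
    - (2 / (x ⬝ᵥ A.mulVec x)) • A

theorem one_le_card_mul_dotProduct_self_of_mem_stdSimplex {ι : Type*} [Fintype ι] {x : ι → ℝ}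
    (hx : x ∈ stdSimplex ℝ ι) : 1 ≤ Fintype.card ι * (x ⬝ᵥ x) := by
  simpa [hx.2, dotProduct, sq] using sq_sum_le_card_mul_sum_sq (s := Finset.univ) (f := x)

namespace Matrix

variable {ι : Type*} [Fintype ι] [DecidableEq ι]

open scoped MatrixOrder in
theorem IsHermitian.mul_dotProduct_self_le_dotProduct_mulVec {A : Matrix ι ι ℝ}
    (hA : A.IsHermitian) {l : ℝ} (hl : ∀ i, l ≤ hA.eigenvalues i) (y : ι → ℝ) :
    l * (y ⬝ᵥ y) ≤ y ⬝ᵥ A *ᵥ y := by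
  have hle : algebraMap ℝ _ l ≤ A := by
    rw [algebraMap_le_iff_le_spectrum hA.isSelfAdjoint, hA.spectrum_real_eq_range_eigenvalues]
    rintro _ ⟨i, rfl⟩
    exact hl i
  have := (le_iff.mp hle).dotProduct_mulVec_nonneg y
  simpa [Algebra.algebraMap_eq_smul_one, sub_mulVec, dotProduct_sub, smul_mulVec,
    dotProduct_smul] using this

open scoped MatrixOrder in
theorem IsHermitian.dotProduct_mulVec_le_mul_dotProduct_self {A : Matrix ι ι ℝ}
    (hA : A.IsHermitian) {u : ℝ} (hu : ∀ i, hA.eigenvalues i ≤ u) (y : ι → ℝ) :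
    y ⬝ᵥ A *ᵥ y ≤ u * (y ⬝ᵥ y) := by
  have hle : A ≤ algebraMap ℝ _ u := by
    rw [le_algebraMap_iff_spectrum_le hA.isSelfAdjoint, hA.spectrum_real_eq_range_eigenvalues]
    rintro _ ⟨i, rfl⟩
    exact hu i
  have := (le_iff.mp hle).dotProduct_mulVec_nonneg y
  simpa [Algebra.algebraMap_eq_smul_one, sub_mulVec, dotProduct_sub, smul_mulVec,
    dotProduct_smul] using this

theorem IsHermitian.le_card_mul_dotProduct_mulVec_of_mem_stdSimplex {A : Matrix ι ι ℝ}
    (hA : A.IsHermitian) {l : ℝ} (hl : ∀ i, l ≤ hA.eigenvalues i) (hl0 : 0 ≤ l) {x : ι → ℝ}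
    (hx : x ∈ stdSimplex ℝ ι) : l ≤ Fintype.card ι * (x ⬝ᵥ A *ᵥ x) := by
  have hnx := one_le_card_mul_dotProduct_self_of_mem_stdSimplex hx
  have hlx := hA.mul_dotProduct_self_le_dotProduct_mulVec hl x
  nlinarith

theorem PosSemidef.dotProduct_mulVec_sq_le {A : Matrix ι ι ℝ} (hA : A.PosSemidef)
    (x y : ι → ℝ) : (x ⬝ᵥ A *ᵥ y) ^ 2 ≤ (x ⬝ᵥ A *ᵥ x) * (y ⬝ᵥ A *ᵥ y) := by
  have hsymm : (toBilin' A).IsSymm :=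
    isSymm_toBilin'_iff_isSymm.mpr (isHermitian_iff_isSymm.mp hA.isHermitian)
  simpa only [toBilin'_apply'] using (toBilin' A).apply_sq_le_of_symm
    (fun v => by simpa [toBilin'_apply'] using hA.dotProduct_mulVec_nonneg v)
    (LinearMap.BilinForm.isSymm_iff.mp hsymm) x y

theorem posDef_smul_one_sub_of_dotProduct_mulVec_le {M : Matrix ι ι ℝ} (hM : M.IsHermitian)
    {c η : ℝ} (hc : c < η) (hle : ∀ y, y ⬝ᵥ M *ᵥ y ≤ c * (y ⬝ᵥ y)) :
    (η • (1 : Matrix ι ι ℝ) - M).PosDef := by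
  refine .of_dotProduct_mulVec_pos ((isHermitian_one.smul (IsSelfAdjoint.all η)).sub hM)
    fun y hy => ?_
  have hy : 0 < y ⬝ᵥ y := by simpa using dotProduct_self_star_pos_iff.mpr hy
  rw [star_trivial, sub_mulVec, dotProduct_sub, smul_mulVec, one_mulVec, dotProduct_smul,
    smul_eq_mul, sub_pos]
  exact (hle y).trans_lt (mul_lt_mul_of_pos_right hc hy)

end Matrix

theorem isHermitian_hessPhi {n : ℕ} {A : Matrix (Fin n) (Fin n) ℝ} (hA : A.IsHermitian)
    (x : Fin n → ℝ) : (hessPhi A x).IsHermitian := by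
  have hvv := (Matrix.posSemidef_vecMulVec_self_star (A *ᵥ x)).isHermitian
  rw [star_trivial (A *ᵥ x)] at hvv
  exact (hvv.smul (IsSelfAdjoint.all _)).sub (hA.smul (IsSelfAdjoint.all _))

theorem dotProduct_hessPhi_mulVec {n : ℕ} (A : Matrix (Fin n) (Fin n) ℝ) (x y : Fin n → ℝ) :
    y ⬝ᵥ hessPhi A x *ᵥ y
      = 4 * (y ⬝ᵥ A *ᵥ x) ^ 2 / (x ⬝ᵥ A *ᵥ x) ^ 2 - 2 * (y ⬝ᵥ A *ᵥ y) / (x ⬝ᵥ A *ᵥ x) := by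
  rw [hessPhi, sub_mulVec, dotProduct_sub, smul_mulVec, smul_mulVec, vecMulVec_mulVec,
    op_smul_eq_smul, dotProduct_smul, dotProduct_smul, dotProduct_smul,
    dotProduct_comm (A *ᵥ x) y, smul_eq_mul, smul_eq_mul, smul_eq_mul]
  ring

theorem dotProduct_hessPhi_mulVec_le {n : ℕ} {A : Matrix (Fin n) (Fin n) ℝ} (hA : A.PosSemidef)
    {x : Fin n → ℝ} (hx : 0 < x ⬝ᵥ A *ᵥ x) (y : Fin n → ℝ) :
    y ⬝ᵥ hessPhi A x *ᵥ y ≤ 2 * (y ⬝ᵥ A *ᵥ y) / (x ⬝ᵥ A *ᵥ x) := by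
  rw [dotProduct_hessPhi_mulVec]
  calc 4 * (y ⬝ᵥ A *ᵥ x) ^ 2 / (x ⬝ᵥ A *ᵥ x) ^ 2 - 2 * (y ⬝ᵥ A *ᵥ y) / (x ⬝ᵥ A *ᵥ x)
      ≤ 4 * ((y ⬝ᵥ A *ᵥ y) * (x ⬝ᵥ A *ᵥ x)) / (x ⬝ᵥ A *ᵥ x) ^ 2
          - 2 * (y ⬝ᵥ A *ᵥ y) / (x ⬝ᵥ A *ᵥ x) := by
        gcongr
        exact hA.dotProduct_mulVec_sq_le y x
    _ = 2 * (y ⬝ᵥ A *ᵥ y) / (x ⬝ᵥ A *ᵥ x) := by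
        field_simp
        ring

theorem g_convex_on_simplex_general (n : ℕ) (A : Matrix (Fin n) (Fin n) ℝ)
    (hA : A.PosDef) (l1 ln κ η : ℝ)
    (hmin : ∀ i, l1 ≤ hA.isHermitian.eigenvalues i)
    (hminmem : ∃ i, hA.isHermitian.eigenvalues i = l1)
    (hmax : ∀ i, hA.isHermitian.eigenvalues i ≤ ln)
    (hκ : κ = ln / l1)
    (hη : 4 * n * κ ^ 2 ≤ η) :
    ∀ x ∈ stdSimplex ℝ (Fin n), (η • (1 : Matrix (Fin n) (Fin n) ℝ) - hessPhi A x).PosDef := by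
  intro x hx
  obtain ⟨i₀, hi₀⟩ := hminmem
  have hn : (0 : ℝ) < n := Nat.cast_pos.mpr i₀.pos
  have hl1 : 0 < l1 := hi₀ ▸ hA.eigenvalues_pos i₀
  have hκ1 : 1 ≤ κ := hκ ▸ (one_le_div hl1).mpr (hi₀ ▸ hmax i₀)
  set q := x ⬝ᵥ A *ᵥ x
  have hq : l1 ≤ n * q := by
    simpa using hA.isHermitian.le_card_mul_dotProduct_mulVec_of_mem_stdSimplex hmin hl1.le hx
  have hq0 : 0 < q := pos_of_mul_pos_right (hl1.trans_le hq) hn.le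
  have hconst : 2 * ln / q < η := calc
    2 * ln / q ≤ 2 * n * κ := by
      have hln : ln = κ * l1 := by rw [hκ, div_mul_cancel₀ _ hl1.ne']
      rw [div_le_iff₀ hq0, hln]
      nlinarith [mul_le_mul_of_nonneg_left hq (by linarith : (0 : ℝ) ≤ κ)]
    _ < 4 * n * κ ^ 2 := by nlinarith [mul_pos hn (by linarith : (0 : ℝ) < κ)]
    _ ≤ η := hη
  refine posDef_smul_one_sub_of_dotProduct_mulVec_le (isHermitian_hessPhi hA.isHermitian x)
    hconst fun y => ?_
  calc y ⬝ᵥ hessPhi A x *ᵥ y ≤ 2 * (y ⬝ᵥ A *ᵥ y) / q :=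
        dotProduct_hessPhi_mulVec_le hA.posSemidef hq0 y
    _ ≤ 2 * (ln * (y ⬝ᵥ y)) / q := by
      gcongr
      exact hA.isHermitian.dotProduct_mulVec_le_mul_dotProduct_self hmax y
    _ = 2 * ln / q * (y ⬝ᵥ y) := by ring

theorem g_convex_on_simplex (n : ℕ) (A : Matrix (Fin n) (Fin n) ℝ)
    (hA : A.PosDef) (l1 ln κ η : ℝ)
    (hmin : ∀ i, l1 ≤ hA.isHermitian.eigenvalues i)
    (hminmem : ∃ i, hA.isHermitian.eigenvalues i = l1)
    (hmax : ∀ i, hA.isHermitian.eigenvalues i ≤ ln)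
    (hmaxmem : ∃ i, hA.isHermitian.eigenvalues i = ln)
    (hκ : κ = ln / l1)
    (hη : 4 * n * κ ^ 2 ≤ η) :
    ∀ x ∈ stdSimplex ℝ (Fin n), (η • (1 : Matrix (Fin n) (Fin n) ℝ) - hessPhi A x).PosDef :=
  g_convex_on_simplex_general n A hA l1 ln κ η hmin hminmem hmax hκ hη
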